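/- arXiv:2406.12342 — 2 statements merged into one kernel-verified Lean document; each statement's English description precedes it below -/
import Mathlib

section
/- Let A be a commutative Poisson *-algebra over ℂ with dense Poisson subalgebra Ȧ, δ : Ȧ → A a *-derivation, β ≥ 0, and ω a state on A. If ω satisfies the classical auto-correlation lower bound -iβ·ω(a*·δ(a)) ≥ -i·ω({a, a*}) for all a ∈ Ȧ, then ω is a (β,δ)-classical KMS state, i.e. ω({a,b}) = β·ω(b·δ(a)) for all a,b ∈ Ȧ. -/
open ComplexOrder

open ComplexConjugate in
/-- Polarization: a sesquilinear form vanishing on the diagonal of a ℂ-subspace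
vanishes on that subspace. -/
lemma polar_zero_aux {A : Type*} [AddCommGroup A] [Module ℂ A] (M : A → Prop)
    (hadd : ∀ x, M x → ∀ y, M y → M (x + y))
    (hsmul : ∀ x, M x → M (Complex.I • x))
    (F : A → A → ℂ)
    (haddl : ∀ x, M x → ∀ y, M y → ∀ z, M z → F (x + y) z = F x z + F y z)
    (haddr : ∀ x, M x → ∀ y, M y → ∀ z, M z → F x (y + z) = F x y + F x z)
    (hsml : ∀ x, M x → ∀ y, M y → F (Complex.I • x) y = Complex.I * F x y)
    (hsmr : ∀ x, M x → ∀ y, M y → F x (Complex.I • y) = -Complex.I * F x y)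
    (hdiag : ∀ x, M x → F x x = 0) :
    ∀ x, M x → ∀ y, M y → F x y = 0 := by
  intro a ha b hb
  have hab := hadd a ha b hb
  have hib := hsmul b hb
  have haib := hadd a ha _ hib
  have e1 : F a b + F b a = 0 := by
    have h0 := hdiag _ hab
    rw [haddl a ha b hb _ hab, haddr a ha a ha b hb, haddr b hb a ha b hb,
      hdiag a ha, hdiag b hb] at h0
    linear_combination h0
  have e2 : F a b = F b a := by
    have h0 := hdiag _ haib
    rw [haddl a ha _ hib _ haib, haddr a ha a ha _ hib, hsml b hb _ haib,
      haddr b hb a ha _ hib, hsmr a ha b hb, hsmr b hb b hb,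
      hdiag a ha, hdiag b hb] at h0
    linear_combination Complex.I * h0 + (F a b - F b a) * Complex.I_mul_I
  linear_combination e1 / 2 + e2 / 2
open ComplexConjugate in
/-- If a state on a commutative Poisson *-algebra satisfies the classical
auto-correlation lower bound `-iβ·ω(a*·δ(a)) ≥ -i·ω({a,a*})` for all `a` in the dense
Poisson subalgebra, then it is a `(β,δ)`-classical KMS state. -/
theorem classical_autocorrelation_implies_KMS
    {A : Type*} [CommRing A] [Algebra ℂ A] [StarRing A] [StarModule ℂ A]
    (Adot : Subalgebra ℂ A) (hAdense : ∀ a ∈ Adot, star a ∈ Adot)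
    -- Poisson bracket on the dense subalgebra
    (P : A → A → A)
    (hPaddl : ∀ a b c, P (a + b) c = P a c + P b c)
    (hPaddr : ∀ a b c, P a (b + c) = P a b + P a c)
    (hPsmull : ∀ (r : ℂ) (a b : A), P (r • a) b = r • P a b)
    (hPsmulr : ∀ (r : ℂ) (a b : A), P a (r • b) = r • P a b)
    (hPanti : ∀ a b, P a b = - P b a)
    (hPstar : ∀ a b, star (P a b) = P (star a) (star b))
    (hPleibniz : ∀ a b c, P a (b * c) = P a b * c + b * P a c)
    (hPjacobi : ∀ a b c, P a (P b c) = P (P a b) c + P b (P a c))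
    (hPmem : ∀ a ∈ Adot, ∀ b ∈ Adot, P a b ∈ Adot)
    -- *-derivation δ : Ȧ → A
    (δ : A → A)
    (hδadd : ∀ a ∈ Adot, ∀ b ∈ Adot, δ (a + b) = δ a + δ b)
    (hδsmul : ∀ (r : ℂ), ∀ a ∈ Adot, δ (r • a) = r • δ a)
    (hδleibniz : ∀ a ∈ Adot, ∀ b ∈ Adot, δ (a * b) = δ a * b + a * δ b)
    (hδstar : ∀ a ∈ Adot, δ (star a) = star (δ a))
    -- the state ω
    (ω : A →ₗ[ℂ] ℂ)
    (hωpos : ∀ a : A, 0 ≤ ω (star a * a))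
    (hωone : ω 1 = 1)
    (β : ℝ) (hβ : 0 ≤ β)
    -- classical auto-correlation lower bound
    (hbound : ∀ a ∈ Adot,
      -Complex.I * ω (P a (star a)) ≤ -Complex.I * ((β : ℂ) * ω (star a * δ a))) :
    -- conclusion: ω is a (β,δ)-classical KMS state
    ∀ a ∈ Adot, ∀ b ∈ Adot, ω (P a b) = (β : ℂ) * ω (b * δ a) := by
  -- the values ω(x* x) are real
  have him : ∀ x : A, (ω (star x * x)).im = 0 := by
    intro x
    have h := hωpos x
    rw [Complex.le_def] at h
    simpa using h.2.symm
  -- ω is hermitian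
  have herm : ∀ x : A, ω (star x) = conj (ω x) := by
    intro x
    have h1 : (ω (star x)).im + (ω x).im = 0 := by
      have e : star (x + 1) * (x + 1) = star x * x + star x + x + 1 := by
        rw [star_add, star_one]; ring
      have h := him (x + 1)
      rw [e] at h
      simp only [map_add, hωone, Complex.add_im, him x, Complex.one_im] at h
      linarith
    have h2 : (ω (star x)).re - (ω x).re = 0 := by
      have e : star (Complex.I • x + 1) * (Complex.I • x + 1)
          = star x * x + (-Complex.I) • star x + Complex.I • x + 1 := by
        rw [star_add, star_one, star_smul, Complex.star_def, Complex.conj_I]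
        simp only [add_mul, mul_add, smul_mul_smul_comm, one_mul, mul_one]
        rw [show -Complex.I * Complex.I = (1 : ℂ) by
          rw [neg_mul, Complex.I_mul_I, neg_neg], one_smul]
        ring
      have h := him (Complex.I • x + 1)
      rw [e] at h
      simp only [map_add, map_smul, hωone, Complex.add_im, him x, Complex.one_im,
        smul_eq_mul, Complex.mul_im, Complex.neg_re, Complex.neg_im, Complex.I_re,
        Complex.I_im] at h
      linarith
    apply Complex.ext
    · simp only [Complex.conj_re]; linarith
    · simp only [Complex.conj_im]; linarith
  -- the defect bilinear form B
    -- B a b = ω (P a b) - β * ω (b * δ a)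
  set B : A → A → ℂ := fun a b => ω (P a b) - (β : ℂ) * ω (b * δ a) with hBdef
  have hBadd1 : ∀ x ∈ Adot, ∀ y ∈ Adot, ∀ z : A, B (x + y) z = B x z + B y z := by
    intro x hx y hy z
    simp only [hBdef, hPaddl, hδadd x hx y hy, mul_add, map_add]
    ring
  have hBsmul1 : ∀ (r : ℂ), ∀ x ∈ Adot, ∀ z : A, B (r • x) z = r * B x z := by
    intro r x hx z
    simp only [hBdef, hPsmull, hδsmul r x hx, mul_smul_comm, map_smul, smul_eq_mul]
    ring
  have hBadd2 : ∀ (x y z : A), B x (y + z) = B x y + B x z := by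
    intro x y z
    simp only [hBdef, hPaddr, add_mul, map_add]
    ring
  have hBsmul2 : ∀ (r : ℂ) (x z : A), B x (r • z) = r * B x z := by
    intro r x z
    simp only [hBdef, hPsmulr, smul_mul_assoc, map_smul, smul_eq_mul]
    ring
  have hBconj : ∀ x ∈ Adot, ∀ z : A, conj (B x z) = B (star x) (star z) := by
    intro x hx z
    simp only [hBdef, map_sub, map_mul, Complex.conj_ofReal]
    rw [← herm, ← herm, hPstar, star_mul, ← hδstar x hx,
      mul_comm (δ (star x)) (star z)]
  -- the auto-correlation bound in terms of B
  have hdiagpos : ∀ x ∈ Adot, 0 ≤ Complex.I * B x (star x) := by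
    intro x hx
    have h := hbound x hx
    have e : Complex.I * B x (star x)
        = -Complex.I * ((β : ℂ) * ω (star x * δ x)) - -Complex.I * ω (P x (star x)) := by
      simp only [hBdef]; ring
    rw [e]
    exact sub_nonneg.mpr h
  -- the sesquilinear form S
  set S : A → A → ℂ := fun x y => Complex.I * B x (star y) with hSdef
  have hSadd1 : ∀ x ∈ Adot, ∀ y ∈ Adot, ∀ z : A, S (x + y) z = S x z + S y z := by
    intro x hx y hy z
    simp only [hSdef, hBadd1 x hx y hy]; ring
  have hSadd2 : ∀ (x y z : A), S x (y + z) = S x y + S x z := by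
    intro x y z
    simp only [hSdef, star_add, hBadd2]; ring
  have hSsmul1 : ∀ x ∈ Adot, ∀ z : A, S (Complex.I • x) z = Complex.I * S x z := by
    intro x hx z
    simp only [hSdef, hBsmul1 Complex.I x hx]; try ring
  have hSsmul2 : ∀ (x z : A), S x (Complex.I • z) = -Complex.I * S x z := by
    intro x z
    simp only [hSdef, star_smul, Complex.star_def, Complex.conj_I, hBsmul2]; try ring
  -- the diagonal of S is real
  have hSreal : ∀ x ∈ Adot, conj (S x x) = S x x := by
    intro x hx
    have h := hdiagpos x hx
    rw [Complex.le_def] at h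
    rw [Complex.conj_eq_iff_im]
    simpa [hSdef] using h.2.symm
  -- membership closure facts
  have hmem_add : ∀ x, x ∈ Adot → ∀ y, y ∈ Adot → x + y ∈ Adot := fun x hx y hy =>
    add_mem hx hy
  have hmem_smul : ∀ x, x ∈ Adot → Complex.I • x ∈ Adot := fun x hx =>
    Adot.smul_mem hx Complex.I
  -- S is hermitian, via polarization of H x y := S x y - conj (S y x)
  have hherm : ∀ x ∈ Adot, ∀ y ∈ Adot, S x y = conj (S y x) := by
    have hz := polar_zero_aux (fun x => x ∈ Adot) hmem_add hmem_smul
      (fun x y => S x y - conj (S y x))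
      (by
        intro x hx y hy z hz
        simp only [hSadd1 x hx y hy, hSadd2, map_add]; ring)
      (by
        intro x hx y hy z hz
        simp only [hSadd2, hSadd1 y hy z hz, map_add]; ring)
      (by
        intro x hx y hy
        simp only [hSsmul1 x hx, hSsmul2, map_mul, map_neg, Complex.conj_I]; ring)
      (by
        intro x hx y hy
        simp only [hSsmul2, hSsmul1 y hy, map_mul, Complex.conj_I]; ring)
      (by
        intro x hx
        show S x x - conj (S x x) = 0
        rw [hSreal x hx]; ring)
    intro x hx y hy
    exact sub_eq_zero.mp (hz x hx y hy)
  -- B is antisymmetric on Adot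
  have hBanti : ∀ x ∈ Adot, ∀ y ∈ Adot, B x y = - B y x := by
    intro x hx y hy
    have hy' := hAdense y hy
    have h := hherm x hx (star y) hy'
    have e1 : S x (star y) = Complex.I * B x y := by
      simp only [hSdef, star_star]
    have e2 : conj (S (star y) x) = -Complex.I * B y x := by
      simp only [hSdef, map_mul, Complex.conj_I]
      rw [hBconj (star y) hy' (star x), star_star, star_star]
    rw [e1, e2] at h
    linear_combination -Complex.I * h + (B x y + B y x) * Complex.I_mul_I
  -- the diagonal of S vanishes
  have hdiag0 : ∀ x ∈ Adot, B x (star x) = 0 := by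
    intro x hx
    have hx' := hAdense x hx
    have h1 := hdiagpos x hx
    have h2 := hdiagpos (star x) hx'
    rw [star_star] at h2
    have e : Complex.I * B (star x) x = -(Complex.I * B x (star x)) := by
      rw [hBanti (star x) hx' x hx]; ring
    rw [e] at h2
    have h3 : Complex.I * B x (star x) = 0 :=
      le_antisymm (neg_nonneg.mp h2) h1
    have hI : Complex.I ≠ 0 := Complex.I_ne_zero
    exact (mul_eq_zero.mp h3).resolve_left hI
  -- polarization: B x (star y) = 0 on Adot
  have hzero : ∀ x ∈ Adot, ∀ y ∈ Adot, B x (star y) = 0 := by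
    exact polar_zero_aux (fun x => x ∈ Adot) hmem_add hmem_smul
      (fun x y => B x (star y))
      (by
        intro x hx y hy z hz
        exact hBadd1 x hx y hy (star z))
      (by
        intro x hx y hy z hz
        show B x (star (y + z)) = B x (star y) + B x (star z)
        rw [star_add, hBadd2])
      (by
        intro x hx y hy
        exact hBsmul1 Complex.I x hx (star y))
      (by
        intro x hx y hy
        show B x (star (Complex.I • y)) = -Complex.I * B x (star y)
        have e : star (Complex.I • y) = (-Complex.I) • star y := by
          rw [star_smul, Complex.star_def, Complex.conj_I]
        rw [e, hBsmul2]
        try ring)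
      hdiag0
  -- conclusion
  intro a ha b hb
  have h := hzero a ha (star b) (hAdense b hb)
  rw [star_star] at h
  have : ω (P a b) - (β : ℂ) * ω (b * δ a) = 0 := h
  linear_combination this
end

section
/- Let A be a commutative Poisson *-algebra with *-derivation δ : Ȧ → A and ω a state such that -i·ω(a*·δ(a)) ≥ 0 for all self-adjoint a ∈ Ȧ (so in particular ω(a*δ(a)) is purely imaginary for self-adjoint a). Then ω is δ-invariant: ω(δ(a)) = 0 for all a ∈ Ȧ. -/
open ComplexOrder

/-- If a state ω on a commutative *-algebra with *-derivation δ satisfies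
`-i·ω(a*·δ(a)) ≥ 0` for all self-adjoint `a` in the dense *-subalgebra Ȧ (whose positive
elements are squares of self-adjoint elements and whose positive elements span it),
then ω is δ-invariant: `ω(δ(a)) = 0` for all `a ∈ Ȧ`. -/
theorem autocorrelation_nonneg_implies_invariance
    {A : Type*} [CommRing A] [Algebra ℂ A] [StarRing A] [StarModule ℂ A]
    (Adot : Subalgebra ℂ A) (hAstar : ∀ a ∈ Adot, star a ∈ Adot)
    -- Ȧ is spanned by squares of its self-adjoint elements
    (hgen : ∀ a ∈ Adot, ∃ (n : ℕ) (c : Fin n → ℂ) (b : Fin n → A),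
      (∀ i, b i ∈ Adot ∧ star (b i) = b i) ∧ a = ∑ i, c i • (b i * b i))
    -- *-derivation δ : Ȧ → A
    (δ : A → A)
    (hδadd : ∀ a ∈ Adot, ∀ b ∈ Adot, δ (a + b) = δ a + δ b)
    (hδsmul : ∀ (r : ℂ), ∀ a ∈ Adot, δ (r • a) = r • δ a)
    (hδleibniz : ∀ a ∈ Adot, ∀ b ∈ Adot, δ (a * b) = δ a * b + a * δ b)
    (hδstar : ∀ a ∈ Adot, δ (star a) = star (δ a))
    -- the state ω
    (ω : A →ₗ[ℂ] ℂ)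
    (hωpos : ∀ a : A, 0 ≤ ω (star a * a))
    (hωone : ω 1 = 1)
    -- hypothesis: -i·ω(a*·δ(a)) ≥ 0 for self-adjoint a ∈ Ȧ
    (hbound : ∀ a ∈ Adot, star a = a → 0 ≤ -Complex.I * ω (star a * δ a)) :
    ∀ a ∈ Adot, ω (δ a) = 0 := by
  -- im of positive values is 0
  have him : ∀ x : A, (ω (star x * x)).im = 0 := by
    intro x
    have := (Complex.le_def.mp (hωpos x)).2
    simpa using this.symm
  -- ω is star-preserving
  have hconj : ∀ x : A, ω (star x) = starRingEnd ℂ (ω x) := by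
    intro x
    have e1 : star (x + 1) * (x + 1) = star x * x + star x + x + 1 := by
      simp [star_add, mul_add, add_mul]; ring
    have e2 : star (Complex.I • x + 1) * (Complex.I • x + 1)
        = star x * x + (-Complex.I) • star x + Complex.I • x + 1 := by
      simp [star_add, star_smul, mul_add, add_mul, smul_smul, mul_smul_comm, smul_mul_assoc]
      abel
    have h1 := him (x + 1)
    have h2 := him (Complex.I • x + 1)
    rw [e1] at h1
    rw [e2] at h2
    simp [map_add, map_smul, hωone, him x, Complex.add_im, Complex.mul_im] at h1 h2
    apply Complex.ext
    · -- real parts from h2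
      have : -(ω (star x)).re + (ω x).re = 0 := by linarith [h2]
      simp [Complex.conj_re]; linarith
    · simp [Complex.conj_im]; linarith [h1]
  -- key: ω (b * δ b) = 0 for self-adjoint b ∈ Adot
  have hkey : ∀ b ∈ Adot, star b = b → ω (b * δ b) = 0 := by
    intro b hb hsb
    set z := ω (b * δ b) with hz
    have hsa : star (b * δ b) = b * δ b := by
      rw [star_mul, ← hδstar b hb, hsb, mul_comm]
    have hreal : (starRingEnd ℂ) z = z := by
      rw [hz, ← hconj, hsa]
    have hb2 := hbound b hb hsb
    rw [hsb] at hb2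
    have him2 : (-Complex.I * z).im = 0 := (Complex.le_def.mp hb2).2.symm |>.trans rfl
    have hre2 : (0:ℝ) ≤ (-Complex.I * z).re := (Complex.le_def.mp hb2).1
    have h1 : z.im = 0 := by
      have := congrArg Complex.im hreal
      simp [Complex.conj_im] at this
      linarith
    have h2 : z.re = 0 := by
      simp [Complex.mul_im, Complex.neg_im, Complex.neg_re, Complex.I_re, Complex.I_im] at him2
      linarith
    apply Complex.ext <;> simp [h1, h2]
  -- ω (δ (b*b)) = 0 for self-adjoint b
  have hsq : ∀ b ∈ Adot, star b = b → ω (δ (b * b)) = 0 := by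
    intro b hb hsb
    rw [hδleibniz b hb b hb, map_add, mul_comm (δ b) b, hkey b hb hsb]
    ring
  intro a ha
  obtain ⟨n, c, b, hbprop, rfl⟩ := hgen a ha
  -- δ of the sum
  have hmem : ∀ s : Finset (Fin n), (∑ i ∈ s, c i • (b i * b i)) ∈ Adot := by
    intro s
    exact Subalgebra.sum_mem _ fun i _ =>
      Subalgebra.smul_mem _ (Subalgebra.mul_mem _ (hbprop i).1 (hbprop i).1) _
  have hδsum : ∀ s : Finset (Fin n),
      ω (δ (∑ i ∈ s, c i • (b i * b i))) = ∑ i ∈ s, c i * ω (δ (b i * b i)) := by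
    intro s
    induction s using Finset.induction with
    | empty =>
      have h0 : δ 0 = 0 := by
        have := hδadd 0 (Subalgebra.zero_mem _) 0 (Subalgebra.zero_mem _)
        simpa using this
      simp [h0]
    | @insert j s hi ih =>
      rw [Finset.sum_insert hi, hδadd _ (Subalgebra.smul_mem _ (Subalgebra.mul_mem _ (hbprop j).1 (hbprop j).1) _) _ (hmem s),
        hδsmul _ _ (Subalgebra.mul_mem _ (hbprop j).1 (hbprop j).1), map_add, map_smul, ih,
        Finset.sum_insert hi]
      simp [smul_eq_mul]
  rw [hδsum Finset.univ]
  refine Finset.sum_eq_zero fun i _ => ?_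
  rw [hsq (b i) (hbprop i).1 (hbprop i).2]
  ring
end
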